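/- For commuting (1,1)-tensor fields A, B, smooth functions f, g, h, k, and every integer m ≥ 2, the level-m Haantjes bracket satisfies H^{(m)}_{fI+gA, hI+kB}(X,Y) = g^m k^m H^{(m)}_{A,B}(X,Y) for all vector fields X, Y. -/

import Mathlib

open scoped Manifold

noncomputable section

variable {E : Type*} [NormedAddCommGroup E] [NormedSpace ℝ E]
  {H : Type*} [TopologicalSpace H] {I : ModelWithCorners ℝ E H}
  {M : Type*} [TopologicalSpace M] [ChartedSpace H M] [IsManifold I (⊤ : ℕ∞) M]

/-- Smooth vector fields on `M`, modeled as derivations of the algebra of smooth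
real-valued functions on `M`. -/
abbrev VectorFieldOn (I : ModelWithCorners ℝ E H) (M : Type*) [TopologicalSpace M]
    [ChartedSpace H M] [IsManifold I (⊤ : ℕ∞) M] :=
  Derivation ℝ (C^(⊤ : ℕ∞)⟮I, M; ℝ⟯) (C^(⊤ : ℕ∞)⟮I, M; ℝ⟯)

/-- (1,1)-tensor fields (operator fields): `C^∞(M)`-linear endomorphisms of the
module of vector fields. -/
abbrev TensorField11 (I : ModelWithCorners ℝ E H) (M : Type*) [TopologicalSpace M]
    [ChartedSpace H M] [IsManifold I (⊤ : ℕ∞) M] :=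
  Module.End (C^(⊤ : ℕ∞)⟮I, M; ℝ⟯) (VectorFieldOn I M)

/-- The Nijenhuis torsion of `A`. -/
def nijTorsion (A : TensorField11 I M) (X Y : VectorFieldOn I M) : VectorFieldOn I M :=
  (A ^ 2) ⁅X, Y⁆ + ⁅A X, A Y⁆ - A (⁅X, A Y⁆ + ⁅A X, Y⁆)

/-- The Frölicher–Nijenhuis bracket of two (1,1)-tensor fields. -/
def fnBracket (A B : TensorField11 I M) (X Y : VectorFieldOn I M) : VectorFieldOn I M :=
  (A * B + B * A) ⁅X, Y⁆ + ⁅A X, B Y⁆ + ⁅B X, A Y⁆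
    - A (⁅X, B Y⁆ + ⁅B X, Y⁆) - B (⁅X, A Y⁆ + ⁅A X, Y⁆)

/-- The Haantjes bracket of level `m` of two (1,1)-tensor fields (level 1 is the
Frölicher–Nijenhuis bracket). -/
def haantjesBracket (A B : TensorField11 I M) :
    ℕ → VectorFieldOn I M → VectorFieldOn I M → VectorFieldOn I M
  | 0 => fnBracket A B
  | 1 => fnBracket A B
  | m + 2 => fun X Y =>
      (A * B + B * A) (haantjesBracket A B (m + 1) X Y)
        + haantjesBracket A B (m + 1) (A X) (B Y) + haantjesBracket A B (m + 1) (B X) (A Y)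
        - A (haantjesBracket A B (m + 1) X (B Y) + haantjesBracket A B (m + 1) (B X) Y)
        - B (haantjesBracket A B (m + 1) X (A Y) + haantjesBracket A B (m + 1) (A X) Y)

/-! ### Auxiliary machinery -/

/-- The bracket of a vector field with a scaled vector field. -/
lemma lie_smul_r (φ : C^(⊤ : ℕ∞)⟮I, M; ℝ⟯) (X Y : VectorFieldOn I M) :
    ⁅X, φ • Y⁆ = φ • ⁅X, Y⁆ + (X φ) • Y := by
  ext ψ
  simp only [Derivation.commutator_apply, Derivation.smul_apply, Derivation.add_apply,
    smul_eq_mul, Derivation.leibniz]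
  ring

lemma lie_smul_l (φ : C^(⊤ : ℕ∞)⟮I, M; ℝ⟯) (X Y : VectorFieldOn I M) :
    ⁅φ • X, Y⁆ = φ • ⁅X, Y⁆ - (Y φ) • X := by
  ext ψ
  simp only [Derivation.commutator_apply, Derivation.smul_apply, Derivation.sub_apply,
    smul_eq_mul, Derivation.leibniz]
  ring

lemma lie_add_r (X Y Y' : VectorFieldOn I M) : ⁅X, Y + Y'⁆ = ⁅X, Y⁆ + ⁅X, Y'⁆ := by
  ext ψ
  simp only [Derivation.commutator_apply, Derivation.add_apply, map_add]
  ring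

lemma lie_add_l (X X' Y : VectorFieldOn I M) : ⁅X + X', Y⁆ = ⁅X, Y⁆ + ⁅X', Y⁆ := by
  ext ψ
  simp only [Derivation.commutator_apply, Derivation.add_apply, map_add]
  ring

/-- The one-step operator of the Haantjes hierarchy. -/
def Lop (A B : TensorField11 I M)
    (T : VectorFieldOn I M → VectorFieldOn I M → VectorFieldOn I M)
    (X Y : VectorFieldOn I M) : VectorFieldOn I M :=
  (A * B + B * A) (T X Y) + T (A X) (B Y) + T (B X) (A Y)
    - A (T X (B Y) + T (B X) Y) - B (T X (A Y) + T (A X) Y)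

lemma haantjes_succ (A B : TensorField11 I M) (m : ℕ) :
    haantjesBracket A B (m + 2) = Lop A B (haantjesBracket A B (m + 1)) := rfl

lemma haantjes_one (A B : TensorField11 I M) :
    haantjesBracket A B 1 = fnBracket A B := rfl

lemma Lop_add (A B : TensorField11 I M)
    (S T : VectorFieldOn I M → VectorFieldOn I M → VectorFieldOn I M)
    (X Y : VectorFieldOn I M) :
    Lop A B (S + T) X Y = Lop A B S X Y + Lop A B T X Y := by
  simp only [Lop, Pi.add_apply, map_add]
  abel

lemma Lop_smul (A B : TensorField11 I M) (c : C^(⊤ : ℕ∞)⟮I, M; ℝ⟯)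
    (T : VectorFieldOn I M → VectorFieldOn I M → VectorFieldOn I M)
    (X Y : VectorFieldOn I M) :
    Lop A B (fun X Y => c • T X Y) X Y = c • Lop A B T X Y := by
  simp only [Lop, map_add, map_smul, smul_add, smul_sub]

/-- An elementary "rank-one type" bilinear expression. -/
def elemT (ω₁ ω₂ : VectorFieldOn I M → C^(⊤ : ℕ∞)⟮I, M; ℝ⟯) (D : TensorField11 I M)
    (X Y : VectorFieldOn I M) : VectorFieldOn I M :=
  ω₁ X • D Y + ω₂ Y • D X

/-- The Haantjes one-step operator annihilates elementary expressions whose operator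
commutes with both `A` and `B`. -/
lemma Lop_elem (A B : TensorField11 I M)
    (ω₁ ω₂ : VectorFieldOn I M → C^(⊤ : ℕ∞)⟮I, M; ℝ⟯) (D : TensorField11 I M)
    (hDA : Commute A D) (hDB : Commute B D) (X Y : VectorFieldOn I M) :
    Lop A B (elemT ω₁ ω₂ D) X Y = 0 := by
  have hA : ∀ Z, D (A Z) = A (D Z) := fun Z => by
    simpa [Module.End.mul_apply] using DFunLike.congr_fun hDA.symm Z
  have hB : ∀ Z, D (B Z) = B (D Z) := fun Z => by
    simpa [Module.End.mul_apply] using DFunLike.congr_fun hDB.symm Z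
  simp only [Lop, elemT, map_add, map_smul, LinearMap.add_apply, Module.End.mul_apply,
    hA, hB]
  module

/-- Tensoriality (function-bilinearity) of a bracket-like expression. -/
structure IsTens (T : VectorFieldOn I M → VectorFieldOn I M → VectorFieldOn I M) : Prop where
  addl : ∀ X X' Y, T (X + X') Y = T X Y + T X' Y
  smull : ∀ (c : C^(⊤ : ℕ∞)⟮I, M; ℝ⟯) X Y, T (c • X) Y = c • T X Y
  addr : ∀ X Y Y', T X (Y + Y') = T X Y + T X Y'
  smulr : ∀ (c : C^(⊤ : ℕ∞)⟮I, M; ℝ⟯) X Y, T X (c • Y) = c • T X Y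

set_option maxHeartbeats 2000000 in
lemma fn_tens (A B : TensorField11 I M) : IsTens (fnBracket A B) where
  addl X X' Y := by
    simp only [fnBracket, map_add, lie_add_l, lie_add_r]
    abel
  smull c X Y := by
    simp only [fnBracket, LinearMap.add_apply, Module.End.mul_apply, map_add, map_sub, map_smul, lie_smul_l, lie_smul_r, smul_add, smul_sub]
    module
  addr X Y Y' := by
    simp only [fnBracket, map_add, lie_add_l, lie_add_r]
    abel
  smulr c X Y := by
    simp only [fnBracket, LinearMap.add_apply, Module.End.mul_apply, map_add, map_sub, map_smul, lie_smul_l, lie_smul_r, smul_add, smul_sub]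
    module

set_option maxHeartbeats 2000000 in
lemma Lop_tens (A B : TensorField11 I M)
    {T : VectorFieldOn I M → VectorFieldOn I M → VectorFieldOn I M} (hT : IsTens T) :
    IsTens (Lop A B T) where
  addl X X' Y := by
    simp only [Lop, map_add, hT.addl]
    abel
  smull c X Y := by
    simp only [Lop, map_add, map_sub, map_smul, hT.smull, smul_add, smul_sub]
  addr X Y Y' := by
    simp only [Lop, map_add, hT.addr]
    abel
  smulr c X Y := by
    simp only [Lop, map_add, map_sub, map_smul, hT.smulr, smul_add, smul_sub]

lemma smul_tens (c : C^(⊤ : ℕ∞)⟮I, M; ℝ⟯)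
    {T : VectorFieldOn I M → VectorFieldOn I M → VectorFieldOn I M} (hT : IsTens T) :
    IsTens (fun X Y => c • T X Y) where
  addl X X' Y := by simp only [hT.addl, smul_add]
  smull d X Y := by rw [hT.smull, smul_comm]
  addr X Y Y' := by simp only [hT.addr, smul_add]
  smulr d X Y := by rw [hT.smulr, smul_comm]

lemma haantjes_tens (A B : TensorField11 I M) : ∀ m, IsTens (haantjesBracket A B m)
  | 0 => fn_tens A B
  | 1 => fn_tens A B
  | (m + 2) => by
      rw [haantjes_succ]
      exact Lop_tens A B (haantjes_tens A B (m + 1))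

set_option maxHeartbeats 2000000 in
/-- The key affine invariance of the one-step operator on tensorial arguments. -/
lemma Lop_affine (A B : TensorField11 I M) (f g h k : C^(⊤ : ℕ∞)⟮I, M; ℝ⟯)
    {T : VectorFieldOn I M → VectorFieldOn I M → VectorFieldOn I M} (hT : IsTens T)
    (X Y : VectorFieldOn I M) :
    Lop (f • (1 : TensorField11 I M) + g • A) (h • (1 : TensorField11 I M) + k • B) T X Y
      = (g * k) • Lop A B T X Y := by
  simp only [Lop, LinearMap.add_apply, LinearMap.smul_apply, Module.End.one_apply,
    Module.End.mul_apply, map_add, map_smul, hT.addl, hT.addr, hT.smull, hT.smulr,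
    smul_add, smul_sub, smul_smul]
  module

set_option maxHeartbeats 2000000 in
/-- Expansion of the Frölicher–Nijenhuis bracket for affine modifications. -/
lemma fn_expand (A B : TensorField11 I M) (f g h k : C^(⊤ : ℕ∞)⟮I, M; ℝ⟯) :
    fnBracket (f • (1 : TensorField11 I M) + g • A) (h • (1 : TensorField11 I M) + k • B)
      = (fun X Y => (g * k) • fnBracket A B X Y)
        + elemT (fun Z => k * (B Z f)) (fun Z => -(k * (B Z f))) 1
        + elemT (fun Z => -(k * (Z f))) (fun Z => k * (Z f)) B
        + elemT (fun Z => g * (A Z h)) (fun Z => -(g * (A Z h))) 1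
        + elemT (fun Z => -(g * (Z h))) (fun Z => g * (Z h)) A
        + elemT (fun Z => g * (A Z k)) (fun Z => -(g * (A Z k))) B
        + elemT (fun Z => -(g * (Z k))) (fun Z => g * (Z k)) (A * B)
        + elemT (fun Z => k * (B Z g)) (fun Z => -(k * (B Z g))) A
        + elemT (fun Z => -(k * (Z g))) (fun Z => k * (Z g)) (B * A) := by
  funext X Y
  simp only [Pi.add_apply, elemT, fnBracket, LinearMap.add_apply, LinearMap.smul_apply,
    Module.End.one_apply, Module.End.mul_apply, map_add, map_sub, map_smul, lie_add_l, lie_add_r,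
    lie_smul_l, lie_smul_r, Derivation.add_apply, Derivation.smul_apply, smul_eq_mul, smul_add, smul_sub,
    smul_smul, neg_smul]
  module

set_option maxHeartbeats 2000000 in
/-- For commuting `A, B`, smooth functions `f, g, h, k` and `m ≥ 2`:
`H^{(m)}_{fI+gA, hI+kB}(X,Y) = gᵐ kᵐ H^{(m)}_{A,B}(X,Y)`. -/
theorem haantjesBracket_affine (m : ℕ) (hm : 2 ≤ m) (A B : TensorField11 I M)
    (hcomm : Commute A B) (f g h k : C^(⊤ : ℕ∞)⟮I, M; ℝ⟯) (X Y : VectorFieldOn I M) :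
    haantjesBracket (f • (1 : TensorField11 I M) + g • A)
        (h • (1 : TensorField11 I M) + k • B) m X Y =
      (g ^ m * k ^ m) • haantjesBracket A B m X Y := by
  set A' : TensorField11 I M := f • (1 : TensorField11 I M) + g • A with hA'
  set B' : TensorField11 I M := h • (1 : TensorField11 I M) + k • B with hB'
  -- commutation facts
  have cA : ∀ D : TensorField11 I M, Commute A D → Commute A' D := fun D hD =>
    Commute.add_left (Commute.smul_left (Commute.one_left D) f) (Commute.smul_left hD g)
  have cB : ∀ D : TensorField11 I M, Commute B D → Commute B' D := fun D hD =>
    Commute.add_left (Commute.smul_left (Commute.one_left D) h) (Commute.smul_left hD k)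
  induction m, hm using Nat.le_induction generalizing X Y with
  | base =>
      rw [show (2 : ℕ) = 0 + 2 from rfl, haantjes_succ, haantjes_succ, haantjes_one,
        haantjes_one, fn_expand A B f g h k]
      rw [Lop_add, Lop_add, Lop_add, Lop_add, Lop_add, Lop_add, Lop_add, Lop_add]
      rw [Lop_elem A' B' _ _ 1 (cA 1 (Commute.one_right A)) (cB 1 (Commute.one_right B)),
        Lop_elem A' B' _ _ B (cA B hcomm) (cB B (Commute.refl B)),
        Lop_elem A' B' _ _ 1 (cA 1 (Commute.one_right A)) (cB 1 (Commute.one_right B)),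
        Lop_elem A' B' _ _ A (cA A (Commute.refl A)) (cB A hcomm.symm),
        Lop_elem A' B' _ _ B (cA B hcomm) (cB B (Commute.refl B)),
        Lop_elem A' B' _ _ (A * B) (cA _ ((Commute.refl A).mul_right hcomm))
          (cB _ (hcomm.symm.mul_right (Commute.refl B))),
        Lop_elem A' B' _ _ A (cA A (Commute.refl A)) (cB A hcomm.symm),
        Lop_elem A' B' _ _ (B * A) (cA _ (hcomm.mul_right (Commute.refl A)))
          (cB _ ((Commute.refl B).mul_right hcomm.symm))]
      rw [Lop_affine A B f g h k (smul_tens (g * k) (fn_tens A B)) X Y,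
        Lop_smul A B (g * k) (fnBracket A B) X Y]
      have : Lop A B (fnBracket A B) X Y = haantjesBracket A B 2 X Y := rfl
      rw [this]
      match_scalars <;> ring
  | succ n hn ih =>
      obtain ⟨p, rfl⟩ : ∃ p, n = p + 1 := ⟨n - 1, by omega⟩
      have hfun : haantjesBracket A' B' (p + 1) =
          fun X Y => (g ^ (p + 1) * k ^ (p + 1)) • haantjesBracket A B (p + 1) X Y :=
        funext fun X => funext fun Y => ih X Y
      show haantjesBracket A' B' (p + 2) X Y =
        (g ^ (p + 2) * k ^ (p + 2)) • haantjesBracket A B (p + 2) X Y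
      rw [haantjes_succ, hfun,
        Lop_affine A B f g h k
          (smul_tens (g ^ (p + 1) * k ^ (p + 1)) (haantjes_tens A B (p + 1))) X Y,
        Lop_smul]
      have hs : haantjesBracket A B (p + 2) X Y
          = Lop A B (haantjesBracket A B (p + 1)) X Y :=
        congrFun (congrFun (haantjes_succ A B p) X) Y
      rw [hs]
      match_scalars <;> ring
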